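/- arXiv:2602.03862 — 2 statements merged into one kernel-verified Lean document; each statement's English description precedes it below -/
import Mathlib

section
/- Let H be a finite simple graph whose vertices all have degree in {3,4,5} satisfying: every 5-vertex has five 3-neighbors; every 5-vertex has at most one 3-neighbor that is a 3(B_weak)-vertex; no 4-vertex has four 3-neighbors; every 3-vertex adjacent to a 3-vertex has its other two neighbors of degree 5; every 3(D)-vertex is adjacent to three 4(B)-vertices; every 4(D)-vertex is adjacent to three 3(B_strong)-vertices and one 4(A)- or 4(B)-vertex; every 4(C_strong)-vertex is adjacent either to one 3(C)- and one 3(B_strong)-vertex or to two 3(B_strong)-vertices; and every 4(C_weak)-vertex is adjacent to at least one 4(A)- or 4(B)-vertex. Here a 3-vertex is 3(A)/3(B)/3(C)/3(D) according to having 3/2/1/0 neighbors of degree 5; a 3(B)-vertex is strong if its third neighbor has degree 4 and weak if it has degree 3; a 4-vertex is 4(A)/4(B)/4(C)/4(D) according to having 0/1/2/3 neighbors of degree 3; a 4(C)-vertex is weak if both its 3-neighbors are 3(C)-vertices, strong otherwise. Then 2|E(H)| ≥ (113/31)|V(H)|. -/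
open SimpleGraph

variable {V : Type*}

/-- Two edges are at distance at most 2 (they "see" each other): distinct and
some endpoint of one equals or is adjacent to some endpoint of the other. -/
def EdgeSees (G : SimpleGraph V) (e e' : Sym2 V) : Prop :=
  e ≠ e' ∧ ∃ a ∈ e, ∃ b ∈ e', a = b ∨ G.Adj a b

/-- `G` admits a strong `N`-edge-coloring. -/
def HasStrongColoring (G : SimpleGraph V) (N : ℕ) : Prop :=
  ∃ f : G.edgeSet → Fin N, ∀ e e' : G.edgeSet, EdgeSees G e.val e'.val → f e ≠ f e'

/-- `G − v`: delete the vertex `v` (remove all edges incident to it). -/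
def DelV (G : SimpleGraph V) (v : V) : SimpleGraph V where
  Adj a b := G.Adj a b ∧ a ≠ v ∧ b ≠ v
  symm := ⟨fun _ _ h => ⟨h.1.symm, h.2.2, h.2.1⟩⟩
  loopless := ⟨fun a h => G.loopless.irrefl a h.1⟩

/-- Number of 3-neighbors. -/
noncomputable def n3 [Fintype V] (H : SimpleGraph V) [DecidableRel H.Adj] (x : V) : ℕ :=
  {y | H.Adj x y ∧ H.degree y = 3}.ncard

/-- Number of 5-neighbors. -/
noncomputable def n5 [Fintype V] (H : SimpleGraph V) [DecidableRel H.Adj] (x : V) : ℕ :=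
  {y | H.Adj x y ∧ H.degree y = 5}.ncard

/-- 3(B): 3-vertex with exactly two 5-neighbors. -/
def Is3B [Fintype V] (H : SimpleGraph V) [DecidableRel H.Adj] (x : V) : Prop :=
  H.degree x = 3 ∧ n5 H x = 2

/-- 3(B_strong): its third neighbor has degree 4. -/
def Is3BStrong [Fintype V] (H : SimpleGraph V) [DecidableRel H.Adj] (x : V) : Prop :=
  Is3B H x ∧ ∃ y, H.Adj x y ∧ H.degree y = 4

/-- 3(B_weak): its third neighbor has degree 3. -/
def Is3BWeak [Fintype V] (H : SimpleGraph V) [DecidableRel H.Adj] (x : V) : Prop :=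
  Is3B H x ∧ ∃ y, H.Adj x y ∧ H.degree y = 3

/-- 3(C): 3-vertex with exactly one 5-neighbor. -/
def Is3C [Fintype V] (H : SimpleGraph V) [DecidableRel H.Adj] (x : V) : Prop :=
  H.degree x = 3 ∧ n5 H x = 1

/-- 3(D): 3-vertex with no 5-neighbor. -/
def Is3D [Fintype V] (H : SimpleGraph V) [DecidableRel H.Adj] (x : V) : Prop :=
  H.degree x = 3 ∧ n5 H x = 0

/-- 4(A): 4-vertex with no 3-neighbor. -/
def Is4A [Fintype V] (H : SimpleGraph V) [DecidableRel H.Adj] (x : V) : Prop :=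
  H.degree x = 4 ∧ n3 H x = 0

/-- 4(B): 4-vertex with exactly one 3-neighbor. -/
def Is4B [Fintype V] (H : SimpleGraph V) [DecidableRel H.Adj] (x : V) : Prop :=
  H.degree x = 4 ∧ n3 H x = 1

/-- 4(C): 4-vertex with exactly two 3-neighbors. -/
def Is4C [Fintype V] (H : SimpleGraph V) [DecidableRel H.Adj] (x : V) : Prop :=
  H.degree x = 4 ∧ n3 H x = 2

/-- 4(D): 4-vertex with exactly three 3-neighbors. -/
def Is4D [Fintype V] (H : SimpleGraph V) [DecidableRel H.Adj] (x : V) : Prop :=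
  H.degree x = 4 ∧ n3 H x = 3

/-- 4(C_weak): both of its 3-neighbors are 3(C)-vertices. -/
def Is4CWeak [Fintype V] (H : SimpleGraph V) [DecidableRel H.Adj] (x : V) : Prop :=
  Is4C H x ∧ ∀ y, H.Adj x y → H.degree y = 3 → Is3C H y

/-- 4(C_strong): a 4(C)-vertex that is not 4(C_weak). -/
def Is4CStrong [Fintype V] (H : SimpleGraph V) [DecidableRel H.Adj] (x : V) : Prop :=
  Is4C H x ∧ ¬ Is4CWeak H x

/-!
Discharging: start from the charge `d(v) − 113/31`, whose total is `2|E(H)| − (113/31)|V(H)|`,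
and move charge along edges by the rules encoded in `transfer`, which preserves the total. The
structural hypotheses then leave every vertex with nonnegative charge: a 3-vertex receives at
least `20/31`, a 5-vertex sends at most `42/31` (at most one of its five 3-neighbours is
3(B_weak)), and a 4-vertex sends at most `11/31` more than it receives.
-/

open Finset

lemma sum_le_card_filter_mul_add {α R : Type*} [Semiring R] [PartialOrder R]
    [IsOrderedAddMonoid R] (s : Finset α) (f : α → R) (p : α → Prop) [DecidablePred p]
    (a b : R) (h : ∀ y ∈ s, f y ≤ if p y then a else b) :
    ∑ y ∈ s, f y ≤ #(s.filter p) * a + #(s.filter (¬ p ·)) * b :=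
  calc ∑ y ∈ s, f y ≤ ∑ y ∈ s, (if p y then a else b) := sum_le_sum h
    _ = _ := by rw [sum_ite, sum_const, sum_const, nsmul_eq_mul, nsmul_eq_mul]

section Neighbours

variable [Fintype V] (H : SimpleGraph V) [DecidableRel H.Adj]

lemma ncard_setOf_adj_and (x : V) (p : V → Prop) [DecidablePred p] :
    {y | H.Adj x y ∧ p y}.ncard = #((H.neighborFinset x).filter p) := by
  rw [← Set.ncard_coe_finset]
  congr 1
  ext y
  simp

lemma n3_eq_card_filter (x : V) :
    n3 H x = #((H.neighborFinset x).filter (H.degree · = 3)) :=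
  ncard_setOf_adj_and H x _

lemma n5_eq_card_filter (x : V) :
    n5 H x = #((H.neighborFinset x).filter (H.degree · = 5)) :=
  ncard_setOf_adj_and H x _

lemma card_filter_add_card_filter_not_neighborFinset (x : V) (p : V → Prop)
    [DecidablePred p] :
    #((H.neighborFinset x).filter p) + #((H.neighborFinset x).filter (¬ p ·)) = H.degree x := by
  rw [card_filter_add_card_filter_not, card_neighborFinset_eq_degree]

lemma two_le_n5_of_adj_degree_three
    (h5 : ∀ x y, H.degree x = 3 → H.Adj x y → H.degree y = 3 →
        ∀ z, H.Adj x z → z ≠ y → H.degree z = 5)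
    {x y : V} (hx : H.degree x = 3) (hxy : H.Adj x y) (hy : H.degree y = 3) :
    2 ≤ n5 H x := by
  classical
  have hsub : (H.neighborFinset x).erase y ⊆ (H.neighborFinset x).filter (H.degree · = 5) :=
    fun z hz => by
      rw [mem_erase, mem_neighborFinset] at hz
      exact mem_filter.mpr ⟨(mem_neighborFinset H x z).mpr hz.2, h5 x y hx hxy hy z hz.2 hz.1⟩
  have := card_le_card hsub
  rw [card_erase_of_mem ((mem_neighborFinset H x y).mpr hxy), card_neighborFinset_eq_degree,
    hx] at this
  rw [n5_eq_card_filter]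
  omega

lemma n3_le_three (h4 : ¬ ∃ x, H.degree x = 4 ∧ ∀ y, H.Adj x y → H.degree y = 3)
    {x : V} (hx : H.degree x = 4) : n3 H x ≤ 3 := by
  by_contra! hgt
  have hfull : #((H.neighborFinset x).filter (H.degree · = 3)) = #(H.neighborFinset x) := by
    have := card_filter_le (H.neighborFinset x) (H.degree · = 3)
    rw [card_neighborFinset_eq_degree, hx] at this ⊢
    rw [n3_eq_card_filter] at hgt
    omega
  refine h4 ⟨x, hx, fun y hy => ?_⟩
  exact filter_card_eq hfull y ((mem_neighborFinset H x y).mpr hy)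

end Neighbours

section Transfer

variable [Fintype V] (H : SimpleGraph V) [DecidableRel H.Adj]

open Classical in
noncomputable def transfer (x y : V) : ℚ :=
  if H.Adj x y then
    if H.degree x = 5 ∧ H.degree y = 3 then (if Is3BWeak H y then 10/31 else 8/31)
    else if H.degree x = 4 ∧ H.degree y = 3 then
      (if Is3D H y then 20/93 else if Is3C H y then 6/31
       else if Is3BStrong H y then 4/31 else 0)
    else if (Is4A H x ∨ Is4B H x) ∧ (Is4D H y ∨ Is4CWeak H y) then 1/31 else 0
  else 0

noncomputable def sent (x : V) : ℚ := ∑ y ∈ H.neighborFinset x, transfer H x y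

noncomputable def received (x : V) : ℚ := ∑ y ∈ H.neighborFinset x, transfer H y x

variable {H}

lemma transfer_nonneg (x y : V) : 0 ≤ transfer H x y := by
  unfold transfer; split_ifs <;> norm_num

lemma transfer_of_not_adj {x y : V} (h : ¬ H.Adj x y) : transfer H x y = 0 := by
  simp [transfer, h]

lemma transfer_of_degree_three {x : V} (y : V) (hx : H.degree x = 3) : transfer H x y = 0 := by
  simp [transfer, hx, Is4A, Is4B]

open Classical in
lemma transfer_of_degree_five {x y : V} (h : H.Adj x y) (hx : H.degree x = 5)
    (hy : H.degree y = 3) : transfer H x y = if Is3BWeak H y then 10/31 else 8/31 := by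
  simp [transfer, h, hx, hy]

open Classical in
lemma transfer_of_degree_four_of_degree_three {x y : V} (h : H.Adj x y) (hx : H.degree x = 4)
    (hy : H.degree y = 3) :
    transfer H x y = if Is3D H y then 20/93 else if Is3C H y then 6/31
      else if Is3BStrong H y then 4/31 else 0 := by
  simp [transfer, h, hx, hy]

open Classical in
lemma transfer_of_degree_four_of_ne_three {x y : V} (h : H.Adj x y) (hx : H.degree x = 4)
    (hy : H.degree y ≠ 3) :
    transfer H x y = if (Is4A H x ∨ Is4B H x) ∧ (Is4D H y ∨ Is4CWeak H y) then 1/31 else 0 := by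
  simp [transfer, h, hx, hy]

lemma transfer_eq_of_is3D {x y : V} (h : H.Adj x y) (hx : H.degree x = 4) (hy : Is3D H y) :
    transfer H x y = 20/93 := by
  simp [transfer, h, hx, hy, hy.1]

lemma transfer_eq_of_is3C {x y : V} (h : H.Adj x y) (hx : H.degree x = 4) (hy : Is3C H y) :
    transfer H x y = 6/31 := by
  simp [transfer, h, hx, hy, Is3D, hy.1, hy.2]

lemma transfer_eq_of_is3BStrong {x y : V} (h : H.Adj x y) (hx : H.degree x = 4)
    (hy : Is3BStrong H y) : transfer H x y = 4/31 := by
  simp [transfer, h, hx, hy, Is3D, Is3C, hy.1.1, hy.1.2]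

lemma received_nonneg (x : V) : 0 ≤ received H x := sum_nonneg fun y _ => transfer_nonneg y x

lemma transfer_le_received {x y : V} (h : H.Adj x y) : transfer H y x ≤ received H x :=
  single_le_sum (f := fun y => transfer H y x) (fun y _ => transfer_nonneg y x)
    ((mem_neighborFinset H x y).mpr h)

lemma sum_sent_eq_sum_received : ∑ x, sent H x = ∑ x, received H x := by
  have extend : ∀ x (f : V → ℚ), (∀ y, ¬ H.Adj x y → f y = 0) →
      ∑ y ∈ H.neighborFinset x, f y = ∑ y, f y := fun x f hf =>
    sum_subset (subset_univ _) fun y _ hy => hf y (by simpa using hy)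
  simp only [sent, received]
  rw [sum_congr rfl fun x _ => extend x _ fun y hy => transfer_of_not_adj hy,
    sum_congr rfl fun x _ => extend x _ fun y hy => transfer_of_not_adj fun h => hy h.symm]
  exact sum_comm

end Transfer

section ThreeVertices

variable [Fintype V] {H : SimpleGraph V} [DecidableRel H.Adj] {x : V}

lemma sent_eq_zero_of_degree_three (hx : H.degree x = 3) : sent H x = 0 :=
  sum_eq_zero fun y _ => transfer_of_degree_three y hx

lemma card_filter_not_degree_five (hx : H.degree x = 3) :
    #((H.neighborFinset x).filter (¬ H.degree · = 5)) = 3 - n5 H x := by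
  have := card_filter_add_card_filter_not_neighborFinset H x (H.degree · = 5)
  rw [n5_eq_card_filter]
  omega

open Classical in
lemma received_eq_of_degree_three (hx : H.degree x = 3) :
    received H x = n5 H x * (if Is3BWeak H x then 10/31 else 8/31)
      + ∑ y ∈ (H.neighborFinset x).filter (¬ H.degree · = 5), transfer H y x := by
  rw [received, ← sum_filter_add_sum_filter_not _ (H.degree · = 5), n5_eq_card_filter,
    sum_congr rfl fun y hy => transfer_of_degree_five
      ((mem_neighborFinset H x y).mp (mem_filter.mp hy).1).symm (mem_filter.mp hy).2 hx,
    sum_const, nsmul_eq_mul]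

lemma n5_mul_add_sum_le_received (hx : H.degree x = 3) :
    n5 H x * (8/31 : ℚ) + ∑ y ∈ (H.neighborFinset x).filter (¬ H.degree · = 5), transfer H y x
      ≤ received H x := by
  classical
  have : (8/31 : ℚ) ≤ if Is3BWeak H x then 10/31 else 8/31 := by split_ifs <;> norm_num
  rw [received_eq_of_degree_three hx]
  gcongr

lemma le_received_of_is3BWeak (h : Is3BWeak H x) : 20/31 ≤ received H x := by
  rw [received_eq_of_degree_three h.1.1, h.1.2, if_pos h]
  linarith [sum_nonneg fun y (_ : y ∈ (H.neighborFinset x).filter (¬ H.degree · = 5)) =>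
    transfer_nonneg (H := H) y x]

lemma le_received_of_is3BStrong (h : Is3BStrong H x) : 20/31 ≤ received H x := by
  obtain ⟨⟨hx, hn5⟩, w, hxw, hw⟩ := h
  have hgift := transfer_eq_of_is3BStrong hxw.symm hw ⟨⟨hx, hn5⟩, w, hxw, hw⟩
  have hmem : w ∈ (H.neighborFinset x).filter (¬ H.degree · = 5) :=
    mem_filter.mpr ⟨(mem_neighborFinset H x w).mpr hxw, by omega⟩
  have hw_le := single_le_sum (f := fun y => transfer H y x)
    (fun y _ => transfer_nonneg y x) hmem
  have := n5_mul_add_sum_le_received hx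
  rw [hn5] at this
  push_cast at this
  linarith

lemma le_received_of_is3C
    (h1 : ∀ x, H.degree x = 3 ∨ H.degree x = 4 ∨ H.degree x = 5)
    (h5 : ∀ x y, H.degree x = 3 → H.Adj x y → H.degree y = 3 →
        ∀ z, H.Adj x z → z ≠ y → H.degree z = 5)
    (h : Is3C H x) : 20/31 ≤ received H x := by
  obtain ⟨hx, hn5⟩ := h
  have hgift : ∀ y ∈ (H.neighborFinset x).filter (¬ H.degree · = 5), 6/31 ≤ transfer H y x := by
    intro y hy
    obtain ⟨hxy, hy5⟩ := mem_filter.mp hy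
    rw [mem_neighborFinset] at hxy
    have hy4 : H.degree y = 4 := by
      rcases h1 y with hy3 | hy4 | hy5'
      · exact absurd (two_le_n5_of_adj_degree_three H h5 hx hxy hy3) (by omega)
      · exact hy4
      · exact absurd hy5' hy5
    rw [transfer_eq_of_is3C hxy.symm hy4 ⟨hx, hn5⟩]
  have hsum := card_nsmul_le_sum _ _ _ hgift
  rw [card_filter_not_degree_five hx, hn5, nsmul_eq_mul] at hsum
  have := n5_mul_add_sum_le_received hx
  rw [hn5] at this
  norm_num at hsum this
  linarith

lemma le_received_of_is3D (h6 : ∀ x, Is3D H x → ∀ y, H.Adj x y → Is4B H y)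
    (h : Is3D H x) : 20/31 ≤ received H x := by
  have hgift : ∀ y ∈ H.neighborFinset x, 20/93 ≤ transfer H y x := fun y hy => by
    rw [mem_neighborFinset] at hy
    rw [transfer_eq_of_is3D hy.symm (h6 x h y hy).1 h]
  have hsum := card_nsmul_le_sum _ _ _ hgift
  rw [card_neighborFinset_eq_degree, h.1, nsmul_eq_mul] at hsum
  rw [received]
  norm_num at hsum ⊢
  linarith

lemma twenty_div_le_received
    (h1 : ∀ x, H.degree x = 3 ∨ H.degree x = 4 ∨ H.degree x = 5)
    (h5 : ∀ x y, H.degree x = 3 → H.Adj x y → H.degree y = 3 →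
        ∀ z, H.Adj x z → z ≠ y → H.degree z = 5)
    (h6 : ∀ x, Is3D H x → ∀ y, H.Adj x y → Is4B H y)
    (hx : H.degree x = 3) : 20/31 ≤ received H x := by
  have hcard := card_filter_not_degree_five hx
  have hle : n5 H x ≤ 3 := by
    have := card_filter_add_card_filter_not_neighborFinset H x (H.degree · = 5)
    rw [n5_eq_card_filter]
    omega
  obtain h0 | h1' | h2 | h3 : n5 H x = 0 ∨ n5 H x = 1 ∨ n5 H x = 2 ∨ n5 H x = 3 := by omega
  · exact le_received_of_is3D h6 ⟨hx, h0⟩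
  · exact le_received_of_is3C h1 h5 ⟨hx, h1'⟩
  · rw [h2] at hcard
    obtain ⟨w, hw⟩ := card_eq_one.mp hcard
    obtain ⟨hxw, hw5⟩ := mem_filter.mp (hw ▸ mem_singleton_self w)
    rw [mem_neighborFinset] at hxw
    rcases h1 w with hw3 | hw4 | hw5'
    · exact le_received_of_is3BWeak ⟨⟨hx, h2⟩, w, hxw, hw3⟩
    · exact le_received_of_is3BStrong ⟨⟨hx, h2⟩, w, hxw, hw4⟩
    · exact absurd hw5' hw5
  · have := n5_mul_add_sum_le_received hx
    rw [h3] at this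
    norm_num at this
    linarith [sum_nonneg fun y (_ : y ∈ (H.neighborFinset x).filter (¬ H.degree · = 5)) =>
      transfer_nonneg (H := H) y x]

end ThreeVertices

section FourVertices

variable [Fintype V] {H : SimpleGraph V} [DecidableRel H.Adj] {x : V}

lemma sent_eq_sum_filter_degree_three (hx : H.degree x = 4) (hn3 : 2 ≤ n3 H x) :
    sent H x = ∑ y ∈ (H.neighborFinset x).filter (H.degree · = 3), transfer H x y := by
  rw [sent, ← sum_filter_add_sum_filter_not _ (H.degree · = 3), add_eq_left]
  refine sum_eq_zero fun y hy => ?_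
  obtain ⟨hxy, hy3⟩ := mem_filter.mp hy
  rw [transfer_of_degree_four_of_ne_three ((mem_neighborFinset H x y).mp hxy) hx hy3,
    if_neg (by rintro ⟨⟨-, h⟩ | ⟨-, h⟩, -⟩ <;> omega)]

lemma sent_le_of_is4A_or_is4B (h : Is4A H x ∨ Is4B H x) : sent H x ≤ 11/31 := by
  obtain ⟨hx, hn3⟩ : H.degree x = 4 ∧ n3 H x ≤ 1 := by
    rcases h with ⟨hx, h⟩ | ⟨hx, h⟩ <;> exact ⟨hx, by omega⟩
  have hbound : ∀ y ∈ H.neighborFinset x,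
      transfer H x y ≤ if H.degree y = 3 then 20/93 else 1/31 := by
    intro y hy
    rw [mem_neighborFinset] at hy
    split_ifs with hy3
    · rw [transfer_of_degree_four_of_degree_three hy hx hy3]; split_ifs <;> norm_num
    · rw [transfer_of_degree_four_of_ne_three hy hx hy3]; split_ifs <;> norm_num
  have hsum := sum_le_card_filter_mul_add _ _ _ _ _ hbound
  have hcard := card_filter_add_card_filter_not_neighborFinset H x (H.degree · = 3)
  rw [hx, ← n3_eq_card_filter] at hcard
  have hcard' : (#((H.neighborFinset x).filter (¬ H.degree · = 3)) : ℚ) = 4 - n3 H x := by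
    have := congrArg (Nat.cast (R := ℚ)) hcard
    push_cast at this
    linarith
  have hn3' : (n3 H x : ℚ) ≤ 1 := by exact_mod_cast hn3
  rw [← n3_eq_card_filter, hcard'] at hsum
  rw [sent]
  linarith

lemma sent_le_of_is4CWeak (h : Is4CWeak H x) : sent H x ≤ 12/31 := by
  obtain ⟨⟨hx, hn3⟩, h3C⟩ := h
  have hbound : ∀ y ∈ (H.neighborFinset x).filter (H.degree · = 3), transfer H x y ≤ 6/31 := by
    intro y hy
    obtain ⟨hxy, hy3⟩ := mem_filter.mp hy
    rw [mem_neighborFinset] at hxy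
    rw [transfer_eq_of_is3C hxy hx (h3C y hxy hy3)]
  have hsum := sum_le_card_nsmul _ _ _ hbound
  rw [← n3_eq_card_filter, hn3, nsmul_eq_mul] at hsum
  rw [sent_eq_sum_filter_degree_three hx (by omega)]
  norm_num at hsum ⊢
  linarith

lemma sent_le_of_is4CStrong
    (h8 : ∀ x, Is4CStrong H x →
        (∀ y, H.Adj x y → H.degree y = 3 → (Is3C H y ∨ Is3BStrong H y)) ∧
        (∃ y, H.Adj x y ∧ Is3BStrong H y))
    (h : Is4CStrong H x) : sent H x ≤ 10/31 := by
  classical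
  obtain ⟨hC, B, hxB⟩ := h8 x h
  obtain ⟨⟨hx, hn3⟩, -⟩ := h
  have hbound : ∀ y ∈ (H.neighborFinset x).filter (H.degree · = 3), transfer H x y ≤ 6/31 := by
    intro y hy
    obtain ⟨hxy, hy3⟩ := mem_filter.mp hy
    rw [mem_neighborFinset] at hxy
    rcases hC y hxy hy3 with hyC | hyB
    · rw [transfer_eq_of_is3C hxy hx hyC]
    · rw [transfer_eq_of_is3BStrong hxy hx hyB]; norm_num
  have hmem : B ∈ (H.neighborFinset x).filter (H.degree · = 3) :=
    mem_filter.mpr ⟨(mem_neighborFinset H x B).mpr hxB.1, hxB.2.1.1⟩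
  have hrest := sum_le_card_nsmul (((H.neighborFinset x).filter (H.degree · = 3)).erase B) _ _
    fun y hy => hbound y (mem_of_mem_erase hy)
  rw [card_erase_of_mem hmem, ← n3_eq_card_filter, hn3, nsmul_eq_mul] at hrest
  rw [sent_eq_sum_filter_degree_three hx (by omega),
    ← add_sum_erase _ _ hmem, transfer_eq_of_is3BStrong hxB.1 hx hxB.2]
  norm_num at hrest ⊢
  linarith

lemma sent_le_of_is4D
    (h7 : ∀ x, Is4D H x →
        (∀ y, H.Adj x y → H.degree y = 3 → Is3BStrong H y) ∧
        (∀ y, H.Adj x y → H.degree y = 4 → (Is4A H y ∨ Is4B H y)))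
    (h : Is4D H x) : sent H x ≤ 12/31 := by
  obtain ⟨hx, hn3⟩ := h
  have hbound : ∀ y ∈ (H.neighborFinset x).filter (H.degree · = 3), transfer H x y ≤ 4/31 := by
    intro y hy
    obtain ⟨hxy, hy3⟩ := mem_filter.mp hy
    rw [mem_neighborFinset] at hxy
    rw [transfer_eq_of_is3BStrong hxy hx ((h7 x ⟨hx, hn3⟩).1 y hxy hy3)]
  have hsum := sum_le_card_nsmul _ _ _ hbound
  rw [← n3_eq_card_filter, hn3, nsmul_eq_mul] at hsum
  rw [sent_eq_sum_filter_degree_three hx (by omega)]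
  norm_num at hsum ⊢
  linarith

lemma le_received_of_adj_is4A_or_is4B {y : V} (hxy : H.Adj x y) (hy : Is4A H y ∨ Is4B H y)
    (hx : Is4D H x ∨ Is4CWeak H x) : 1/31 ≤ received H x := by
  have hy4 : H.degree y = 4 := by rcases hy with hy | hy <;> exact hy.1
  have hx4 : H.degree x ≠ 3 := by rcases hx with ⟨hx, -⟩ | ⟨⟨hx, -⟩, -⟩ <;> omega
  calc (1/31 : ℚ) = transfer H y x := by
        rw [transfer_of_degree_four_of_ne_three hxy.symm hy4 hx4, if_pos ⟨hy, hx⟩]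
    _ ≤ received H x := transfer_le_received hxy

lemma exists_adj_is4A_or_is4B_of_is4D
    (h1 : ∀ x, H.degree x = 3 ∨ H.degree x = 4 ∨ H.degree x = 5)
    (h2 : ∀ x y, H.degree x = 5 → H.Adj x y → H.degree y = 3)
    (h7 : ∀ x, Is4D H x →
        (∀ y, H.Adj x y → H.degree y = 3 → Is3BStrong H y) ∧
        (∀ y, H.Adj x y → H.degree y = 4 → (Is4A H y ∨ Is4B H y)))
    (h : Is4D H x) : ∃ y, H.Adj x y ∧ (Is4A H y ∨ Is4B H y) := by
  have hcard := card_filter_add_card_filter_not_neighborFinset H x (H.degree · = 3)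
  rw [h.1, ← n3_eq_card_filter, h.2] at hcard
  obtain ⟨w, hw⟩ :=
    card_eq_one.mp (by omega : #((H.neighborFinset x).filter (¬ H.degree · = 3)) = 1)
  obtain ⟨hxw, hw3⟩ := mem_filter.mp (hw ▸ mem_singleton_self w)
  rw [mem_neighborFinset] at hxw
  have hw4 : H.degree w = 4 := by
    rcases h1 w with hw3' | hw4 | hw5
    · exact absurd hw3' hw3
    · exact hw4
    · exact absurd (h2 w x hw5 hxw.symm) (by rw [h.1]; decide)
  exact ⟨w, hxw, (h7 x h).2 w hxw hw4⟩

lemma sent_le_received_add_of_degree_four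
    (h1 : ∀ x, H.degree x = 3 ∨ H.degree x = 4 ∨ H.degree x = 5)
    (h2 : ∀ x y, H.degree x = 5 → H.Adj x y → H.degree y = 3)
    (h4 : ¬ ∃ x, H.degree x = 4 ∧ ∀ y, H.Adj x y → H.degree y = 3)
    (h7 : ∀ x, Is4D H x →
        (∀ y, H.Adj x y → H.degree y = 3 → Is3BStrong H y) ∧
        (∀ y, H.Adj x y → H.degree y = 4 → (Is4A H y ∨ Is4B H y)))
    (h8 : ∀ x, Is4CStrong H x →
        (∀ y, H.Adj x y → H.degree y = 3 → (Is3C H y ∨ Is3BStrong H y)) ∧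
        (∃ y, H.Adj x y ∧ Is3BStrong H y))
    (h9 : ∀ x, Is4CWeak H x → ∃ y, H.Adj x y ∧ (Is4A H y ∨ Is4B H y))
    (hx : H.degree x = 4) : sent H x ≤ received H x + 11/31 := by
  have := received_nonneg (H := H) x
  obtain h01 | h2' | h3 : n3 H x ≤ 1 ∨ n3 H x = 2 ∨ n3 H x = 3 := by
    have := n3_le_three H h4 hx; omega
  · have hAB : Is4A H x ∨ Is4B H x := by
      rcases Nat.le_one_iff_eq_zero_or_eq_one.mp h01 with h | h
      exacts [.inl ⟨hx, h⟩, .inr ⟨hx, h⟩]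
    linarith [sent_le_of_is4A_or_is4B hAB]
  · by_cases hweak : Is4CWeak H x
    · obtain ⟨y, hxy, hy⟩ := h9 x hweak
      linarith [sent_le_of_is4CWeak hweak, le_received_of_adj_is4A_or_is4B hxy hy (.inr hweak)]
    · linarith [sent_le_of_is4CStrong h8 ⟨⟨hx, h2'⟩, hweak⟩]
  · obtain ⟨y, hxy, hy⟩ := exists_adj_is4A_or_is4B_of_is4D h1 h2 h7 ⟨hx, h3⟩
    linarith [sent_le_of_is4D h7 ⟨hx, h3⟩, le_received_of_adj_is4A_or_is4B hxy hy (.inl ⟨hx, h3⟩)]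

end FourVertices

section FinalCharge

variable [Fintype V] {H : SimpleGraph V} [DecidableRel H.Adj]

lemma sent_le_of_degree_five (h2 : ∀ x y, H.degree x = 5 → H.Adj x y → H.degree y = 3)
    (h3 : ∀ x, H.degree x = 5 → {y | H.Adj x y ∧ Is3BWeak H y}.ncard ≤ 1)
    {x : V} (hx : H.degree x = 5) : sent H x ≤ 42/31 := by
  classical
  have hbound : ∀ y ∈ H.neighborFinset x,
      transfer H x y ≤ if Is3BWeak H y then 10/31 else 8/31 := fun y hy => by
    rw [mem_neighborFinset] at hy
    rw [transfer_of_degree_five hy hx (h2 x y hx hy)]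
  have hsum := sum_le_card_filter_mul_add _ _ _ _ _ hbound
  have hweak := h3 x hx
  rw [ncard_setOf_adj_and] at hweak
  have hcard := card_filter_add_card_filter_not_neighborFinset H x (Is3BWeak H)
  rw [hx] at hcard
  have hcard' := congrArg (Nat.cast (R := ℚ)) hcard
  have hweak' : (#((H.neighborFinset x).filter (Is3BWeak H)) : ℚ) ≤ 1 := by exact_mod_cast hweak
  push_cast at hcard'
  rw [sent]
  linarith

lemma le_degree_sub_sent_add_received
    (h1 : ∀ x, H.degree x = 3 ∨ H.degree x = 4 ∨ H.degree x = 5)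
    (h2 : ∀ x y, H.degree x = 5 → H.Adj x y → H.degree y = 3)
    (h3 : ∀ x, H.degree x = 5 → {y | H.Adj x y ∧ Is3BWeak H y}.ncard ≤ 1)
    (h4 : ¬ ∃ x, H.degree x = 4 ∧ ∀ y, H.Adj x y → H.degree y = 3)
    (h5 : ∀ x y, H.degree x = 3 → H.Adj x y → H.degree y = 3 →
        ∀ z, H.Adj x z → z ≠ y → H.degree z = 5)
    (h6 : ∀ x, Is3D H x → ∀ y, H.Adj x y → Is4B H y)
    (h7 : ∀ x, Is4D H x →
        (∀ y, H.Adj x y → H.degree y = 3 → Is3BStrong H y) ∧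
        (∀ y, H.Adj x y → H.degree y = 4 → (Is4A H y ∨ Is4B H y)))
    (h8 : ∀ x, Is4CStrong H x →
        (∀ y, H.Adj x y → H.degree y = 3 → (Is3C H y ∨ Is3BStrong H y)) ∧
        (∃ y, H.Adj x y ∧ Is3BStrong H y))
    (h9 : ∀ x, Is4CWeak H x → ∃ y, H.Adj x y ∧ (Is4A H y ∨ Is4B H y)) (x : V) :
    113/31 ≤ H.degree x - sent H x + received H x := by
  rcases h1 x with hx | hx | hx <;> rw [hx]
  · linarith [sent_eq_zero_of_degree_three hx, twenty_div_le_received h1 h5 h6 hx]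
  · linarith [sent_le_received_add_of_degree_four h1 h2 h4 h7 h8 h9 hx]
  · linarith [sent_le_of_degree_five h2 h3 hx, received_nonneg (H := H) x]

end FinalCharge

/-- Discharging step for Theorem 2: the structural conditions force
average degree at least 113/31. -/
theorem stmt13 [Fintype V] (H : SimpleGraph V) [DecidableRel H.Adj]
    (h1 : ∀ x, H.degree x = 3 ∨ H.degree x = 4 ∨ H.degree x = 5)
    (h2 : ∀ x y, H.degree x = 5 → H.Adj x y → H.degree y = 3)
    (h3 : ∀ x, H.degree x = 5 → {y | H.Adj x y ∧ Is3BWeak H y}.ncard ≤ 1)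
    (h4 : ¬ ∃ x, H.degree x = 4 ∧ ∀ y, H.Adj x y → H.degree y = 3)
    (h5 : ∀ x y, H.degree x = 3 → H.Adj x y → H.degree y = 3 →
        ∀ z, H.Adj x z → z ≠ y → H.degree z = 5)
    (h6 : ∀ x, Is3D H x → ∀ y, H.Adj x y → Is4B H y)
    (h7 : ∀ x, Is4D H x →
        (∀ y, H.Adj x y → H.degree y = 3 → Is3BStrong H y) ∧
        (∀ y, H.Adj x y → H.degree y = 4 → (Is4A H y ∨ Is4B H y)))
    (h8 : ∀ x, Is4CStrong H x →
        (∀ y, H.Adj x y → H.degree y = 3 → (Is3C H y ∨ Is3BStrong H y)) ∧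
        (∃ y, H.Adj x y ∧ Is3BStrong H y))
    (h9 : ∀ x, Is4CWeak H x → ∃ y, H.Adj x y ∧ (Is4A H y ∨ Is4B H y)) :
    (113 / 31 : ℚ) * Fintype.card V ≤ 2 * H.edgeSet.ncard := by
  calc (113 / 31 : ℚ) * Fintype.card V = ∑ _x : V, (113 / 31 : ℚ) := by
        rw [sum_const, card_univ, nsmul_eq_mul, mul_comm]
    _ ≤ ∑ x, (H.degree x - sent H x + received H x) :=
        sum_le_sum fun x _ => le_degree_sub_sent_add_received h1 h2 h3 h4 h5 h6 h7 h8 h9 x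
    _ = ∑ x, (H.degree x : ℚ) := by
        rw [sum_add_distrib, sum_sub_distrib, sum_sent_eq_sum_received, sub_add_cancel]
    _ = 2 * H.edgeSet.ncard := by
        rw [← coe_edgeFinset, Set.ncard_coe_finset]
        exact_mod_cast sum_degrees_eq_twice_card_edges H
end

section
/- Let H be a vertex-minimal finite simple graph with θ(H) ≤ 7 and χ'_s(H) > 13. Then H contains no 4-cycle x₁x₂x₃x₄ in which all four vertices have degree 3 and all three neighbors of x₁ have degree 3. -/
open SimpleGraph

variable {V : Type*}

/-!
A strong 13-coloring of `H − x₁` extends greedily to the three edges at `x₁`. Apart from edges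
at `x₁`, an edge `uw` sees only edges at neighbors of `u` or `w`. With all neighbors of `x₁` of
degree 3 and `θ(H) ≤ 7`, this bounds the colored edges seen by the third edge `x₁y` by
6 + 6 = 12, and those seen by `x₁x₂` and `x₁x₄` by 10 each, since the 4-cycle makes one edge
at `x₃` count twice. So coloring `x₁y` first, then `x₁x₂`, then `x₁x₄` never runs out of
colors.
-/

open Finset

section Coloring

variable {G : SimpleGraph V}

lemma EdgeSees.symm {e e' : Sym2 V} (h : EdgeSees G e e') : EdgeSees G e' e := by
  obtain ⟨hne, a, ha, b, hb, hab⟩ := h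
  exact ⟨hne.symm, b, hb, a, ha, hab.imp Eq.symm Adj.symm⟩

lemma mem_edgeSet_delV {v : V} {e : Sym2 V} :
    e ∈ (DelV G v).edgeSet ↔ e ∈ G.edgeSet ∧ v ∉ e := by
  induction e using Sym2.ind with
  | _ a b =>
    simp only [mem_edgeSet, Sym2.mem_iff, not_or]
    exact ⟨fun ⟨h, ha, hb⟩ => ⟨h, Ne.symm ha, Ne.symm hb⟩,
      fun ⟨h, ha, hb⟩ => ⟨h, Ne.symm ha, Ne.symm hb⟩⟩

lemma EdgeSees.delV {v : V} {e e' : Sym2 V} (h : EdgeSees G e e')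
    (he : e ∈ (DelV G v).edgeSet) (he' : e' ∈ (DelV G v).edgeSet) :
    EdgeSees (DelV G v) e e' := by
  obtain ⟨hne, a, ha, b, hb, hab⟩ := h
  refine ⟨hne, a, ha, b, hb, hab.imp id fun h => ⟨h, ?_, ?_⟩⟩
  · rintro rfl; exact (mem_edgeSet_delV.1 he).2 ha
  · rintro rfl; exact (mem_edgeSet_delV.1 he').2 hb

def IsStrongColoringOn (G : SimpleGraph V) (S : Set (Sym2 V)) {N : ℕ} (c : Sym2 V → Fin N) :
    Prop :=
  ∀ e ∈ S, ∀ e' ∈ S, EdgeSees G e e' → c e ≠ c e'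

lemma IsStrongColoringOn.mono {S T : Set (Sym2 V)} {N : ℕ} {c : Sym2 V → Fin N}
    (h : IsStrongColoringOn G S c) (hTS : T ⊆ S) : IsStrongColoringOn G T c :=
  fun e he e' he' => h e (hTS he) e' (hTS he')

lemma IsStrongColoringOn.hasStrongColoring {N : ℕ} {c : Sym2 V → Fin N}
    (h : IsStrongColoringOn G G.edgeSet c) : HasStrongColoring G N :=
  ⟨fun e => c e, fun e e' hee' => h e e.2 e' e'.2 hee'⟩

lemma HasStrongColoring.exists_isStrongColoringOn_delV {v : V} {N : ℕ} [NeZero N]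
    (h : HasStrongColoring (DelV G v) N) :
    ∃ c : Sym2 V → Fin N, IsStrongColoringOn G (DelV G v).edgeSet c := by
  classical
  obtain ⟨f, hf⟩ := h
  refine ⟨fun e => if he : e ∈ (DelV G v).edgeSet then f ⟨e, he⟩ else 0, ?_⟩
  intro e he e' he' hee'
  simpa only [dif_pos he, dif_pos he'] using hf ⟨e, he⟩ ⟨e', he'⟩ (hee'.delV he he')

lemma IsStrongColoringOn.exists_insert {S : Set (Sym2 V)} {N : ℕ} {c : Sym2 V → Fin N}
    (h : IsStrongColoringOn G S c) {e : Sym2 V} (T : Finset (Sym2 V)) (hT : #T < N)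
    (hcover : ∀ e' ∈ S, EdgeSees G e e' → e' ∈ T) :
    ∃ c' : Sym2 V → Fin N, IsStrongColoringOn G (insert e S) c' := by
  classical
  obtain ⟨k, hk⟩ : ∃ k, k ∉ T.image c := by
    by_contra! hall
    have := card_le_card fun k (_ : k ∈ univ) => hall k
    rw [card_univ, Fintype.card_fin] at this
    exact absurd (this.trans card_image_le) (not_le.2 hT)
  have hfresh : ∀ e' ∈ S, EdgeSees G e e' → k ≠ c e' := fun e' he' hsee hke =>
    hk (mem_image.2 ⟨e', hcover e' he' hsee, hke.symm⟩)
  refine ⟨Function.update c e k, ?_⟩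
  rintro e₁ he₁ e₂ he₂ hsee
  by_cases h₁ : e₁ = e <;> by_cases h₂ : e₂ = e
  · exact absurd (h₁.trans h₂.symm) hsee.1
  · subst h₁
    rw [Function.update_self, Function.update_of_ne h₂]
    exact hfresh e₂ (he₂.resolve_left h₂) hsee
  · subst h₂
    rw [Function.update_self, Function.update_of_ne h₁]
    exact (hfresh e₁ (he₁.resolve_left h₁) hsee.symm).symm
  · rw [Function.update_of_ne h₁, Function.update_of_ne h₂]
    exact h e₁ (he₁.resolve_left h₁) e₂ (he₂.resolve_left h₂) hsee

end Coloring

namespace SimpleGraph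

variable {G : SimpleGraph V}

lemma exists_third_neighbor {v a b : V} [Fintype (G.neighborSet v)] (hd : G.degree v = 3)
    (ha : G.Adj v a) (hb : G.Adj v b) (hab : a ≠ b) :
    ∃ c, G.Adj v c ∧ ∀ d, G.Adj v d → d = a ∨ d = b ∨ d = c := by
  classical
  have hcard : #(((G.neighborFinset v).erase a).erase b) = 1 := by
    rw [card_erase_of_mem (mem_erase.2 ⟨hab.symm, (G.mem_neighborFinset v b).2 hb⟩),
      card_erase_of_mem ((G.mem_neighborFinset v a).2 ha), card_neighborFinset_eq_degree, hd]
  obtain ⟨c, hc⟩ := card_eq_one.1 hcard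
  have hmem : ∀ d, d ∈ ((G.neighborFinset v).erase a).erase b ↔
      d ≠ b ∧ d ≠ a ∧ G.Adj v d := by
    simp
  refine ⟨c, ((hmem c).1 (hc ▸ mem_singleton_self c)).2.2, fun d hd => ?_⟩
  by_cases hda : d = a; · exact Or.inl hda
  by_cases hdb : d = b; · exact Or.inr (Or.inl hdb)
  exact Or.inr (Or.inr (mem_singleton.1 (hc ▸ (hmem d).2 ⟨hdb, hda, hd⟩)))

lemma edgeSet_subset_insert_delV {v a b c : V}
    (h : ∀ d, G.Adj v d → d = a ∨ d = b ∨ d = c) :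
    G.edgeSet ⊆ insert s(v, a) (insert s(v, b) (insert s(v, c) (DelV G v).edgeSet)) := by
  intro e he
  by_cases hv : v ∈ e
  · obtain ⟨d, rfl⟩ := Sym2.mem_iff_exists.1 hv
    rcases h d he with rfl | rfl | rfl <;> simp
  · exact Set.mem_insert_of_mem _ (Set.mem_insert_of_mem _
      (Set.mem_insert_of_mem _ (mem_edgeSet_delV.2 ⟨he, hv⟩)))

section Counting

variable [Fintype V] [DecidableRel G.Adj]

lemma sum_neighborFinset_degree_sub_one {u : V} {d : ℕ}
    (h : ∀ b, G.Adj u b → G.degree b = d) :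
    ∑ b ∈ G.neighborFinset u, (G.degree b - 1) = G.degree u * (d - 1) := by
  rw [sum_const_nat fun b hb => by rw [h b ((G.mem_neighborFinset u b).1 hb)],
    card_neighborFinset_eq_degree]

lemma sum_degree_sub_one_le_of_ore {k : ℕ}
    (hore : ∀ u w, G.Adj u w → G.degree u + G.degree w ≤ k) {w : V} {X : Finset V}
    (hX : X ⊆ G.neighborFinset w) :
    ∑ b ∈ X, (G.degree b - 1) ≤ #X * (k - G.degree w - 1) := by
  refine (sum_le_card_nsmul X _ _ fun b hb => ?_).trans_eq (smul_eq_mul _ _)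
  have := hore w b ((G.mem_neighborFinset w b).1 (hX hb))
  omega

variable [DecidableEq V]

variable (G) in
def outerEdges (u : V) (X : Finset V) : Finset (Sym2 V) :=
  X.biUnion fun b => (G.incidenceFinset b).erase s(u, b)

lemma mem_outerEdges {u : V} {X : Finset V} {e : Sym2 V} :
    e ∈ G.outerEdges u X ↔ ∃ b ∈ X, e ≠ s(u, b) ∧ e ∈ G.edgeSet ∧ b ∈ e := by
  simp [outerEdges, incidenceSet]

lemma card_outerEdges_le {u : V} {X : Finset V} (hX : ∀ b ∈ X, G.Adj u b) :
    #(G.outerEdges u X) ≤ ∑ b ∈ X, (G.degree b - 1) := by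
  refine card_biUnion_le.trans (sum_le_sum fun b hb => ?_)
  rw [card_erase_of_mem ((G.mem_incidenceFinset _ _).2
    (G.mk'_mem_incidenceSet_right_iff.2 (hX b hb))), card_incidenceFinset_eq_degree]

variable (G) in
def nearEdges (u w : V) : Finset (Sym2 V) :=
  G.outerEdges u (G.neighborFinset u) ∪ G.outerEdges w ((G.neighborFinset w).erase u)

lemma mem_nearEdges_of_edgeSees {u w : V} {e : Sym2 V} (huw : G.Adj u w)
    (he : e ∈ (DelV G u).edgeSet) (hsee : EdgeSees G s(u, w) e) : e ∈ G.nearEdges u w := by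
  obtain ⟨heG, hue⟩ := mem_edgeSet_delV.1 he
  have hne : ∀ b, e ≠ s(u, b) := fun b h => hue (h ▸ Sym2.mem_mk_left u b)
  obtain ⟨-, a, ha, b, hb, hab⟩ := hsee
  have hbu : b ≠ u := by rintro rfl; exact hue hb
  simp only [nearEdges, mem_union, mem_outerEdges, mem_neighborFinset, mem_erase]
  rcases Sym2.mem_iff.1 ha with rfl | rfl
  · exact Or.inl ⟨b, hab.resolve_left hbu.symm, hne b, heG, hb⟩
  · rcases hab with rfl | hab
    · exact Or.inl ⟨a, huw, hne a, heG, hb⟩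
    by_cases hab' : e = s(a, b)
    · exact Or.inl ⟨a, huw, hne a, heG, hab' ▸ Sym2.mem_mk_left a b⟩
    · exact Or.inr ⟨b, ⟨hbu, hab⟩, hab', heG, hb⟩

lemma card_nearEdges_le (u w : V) :
    #(G.nearEdges u w) ≤ ∑ b ∈ G.neighborFinset u, (G.degree b - 1) +
      ∑ b ∈ (G.neighborFinset w).erase u, (G.degree b - 1) :=
  (card_union_le _ _).trans <| add_le_add
    (card_outerEdges_le fun b hb => (G.mem_neighborFinset u b).1 hb)
    (card_outerEdges_le fun b hb => (G.mem_neighborFinset w b).1 (mem_of_mem_erase hb))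

/-- On a 4-cycle `uwzx` the edge `xz` is counted twice in `card_nearEdges_le`. -/
lemma card_nearEdges_lt {u w z x : V} (hwz : G.Adj w z) (hzx : G.Adj z x) (hxu : G.Adj x u)
    (hzu : z ≠ u) (hxw : x ≠ w) :
    #(G.nearEdges u w) < ∑ b ∈ G.neighborFinset u, (G.degree b - 1) +
      ∑ b ∈ (G.neighborFinset w).erase u, (G.degree b - 1) := by
  have hxz : s(x, z) ∈ G.outerEdges u (G.neighborFinset u) ∩
      G.outerEdges w ((G.neighborFinset w).erase u) := by
    simp only [mem_inter, mem_outerEdges, mem_neighborFinset, mem_erase, mem_edgeSet]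
    refine ⟨⟨x, hxu.symm, ?_, hzx.symm, Sym2.mem_mk_left x z⟩,
      ⟨z, ⟨hzu, hwz⟩, ?_, hzx.symm, Sym2.mem_mk_right x z⟩⟩ <;>
    simp [hzu, hxw, hxu.ne, hzx.ne']
  have hunion := card_union_add_card_inter (G.outerEdges u (G.neighborFinset u))
    (G.outerEdges w ((G.neighborFinset w).erase u))
  have hinter := card_pos.2 ⟨_, hxz⟩
  have hu := card_outerEdges_le fun b hb => (G.mem_neighborFinset u b).1 hb
  have hw := card_outerEdges_le (u := w) (X := (G.neighborFinset w).erase u)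
    fun b hb => (G.mem_neighborFinset w b).1 (mem_of_mem_erase hb)
  rw [nearEdges]
  omega

lemma card_nearEdges_le_twelve (hore : ∀ u w, G.Adj u w → G.degree u + G.degree w ≤ 7)
    {u w : V} (hu : G.degree u = 3) (hN : ∀ b, G.Adj u b → G.degree b = 3) (huw : G.Adj u w) :
    #(G.nearEdges u w) ≤ 12 := by
  have hw := hN w huw
  have hcard : #((G.neighborFinset w).erase u) = 2 := by
    rw [card_erase_of_mem ((G.mem_neighborFinset w u).2 huw.symm), card_neighborFinset_eq_degree,
      hw]
  have hsum_u := sum_neighborFinset_degree_sub_one hN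
  have hsum_w := sum_degree_sub_one_le_of_ore hore (erase_subset u (G.neighborFinset w))
  have := card_nearEdges_le (G := G) u w
  rw [hcard, hw] at hsum_w
  rw [hu] at hsum_u
  omega

lemma card_nearEdges_le_ten (hore : ∀ u w, G.Adj u w → G.degree u + G.degree w ≤ 7)
    {u w z x : V} (hu : G.degree u = 3) (hN : ∀ b, G.Adj u b → G.degree b = 3) (huw : G.Adj u w)
    (hwz : G.Adj w z) (hzx : G.Adj z x) (hxu : G.Adj x u) (hzu : z ≠ u) (hxw : x ≠ w)
    (hz : G.degree z = 3) : #(G.nearEdges u w) ≤ 10 := by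
  have hw := hN w huw
  have hzmem : z ∈ (G.neighborFinset w).erase u :=
    mem_erase.2 ⟨hzu, (G.mem_neighborFinset w z).2 hwz⟩
  have hcard : #(((G.neighborFinset w).erase u).erase z) = 1 := by
    rw [card_erase_of_mem hzmem, card_erase_of_mem ((G.mem_neighborFinset w u).2 huw.symm),
      card_neighborFinset_eq_degree, hw]
  have hsum_u := sum_neighborFinset_degree_sub_one hN
  have hsum_w := sum_degree_sub_one_le_of_ore hore
    ((erase_subset z _).trans (erase_subset u (G.neighborFinset w)))
  have := card_nearEdges_lt hwz hzx hxu hzu hxw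
  rw [← add_sum_erase _ _ hzmem] at this
  rw [hcard, hw] at hsum_w
  rw [hu] at hsum_u
  omega

end Counting

end SimpleGraph

/-- θ ≤ 7, χ'ₛ > 13: no 4-cycle x₁x₂x₃x₄ all of degree 3 where all three
neighbors of x₁ have degree 3 (x₁ is a 3(D)-vertex). -/
theorem stmt17 [Fintype V] (H : SimpleGraph V) [DecidableRel H.Adj]
    (hore : ∀ u w, H.Adj u w → H.degree u + H.degree w ≤ 7)
    (hnc : ¬ HasStrongColoring H 13)
    (hmin : ∀ v, HasStrongColoring (DelV H v) 13) :
    ¬ ∃ x₁ x₂ x₃ x₄ : V, H.Adj x₁ x₂ ∧ H.Adj x₂ x₃ ∧ H.Adj x₃ x₄ ∧ H.Adj x₄ x₁ ∧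
      x₁ ≠ x₃ ∧ x₂ ≠ x₄ ∧
      H.degree x₁ = 3 ∧ H.degree x₂ = 3 ∧ H.degree x₃ = 3 ∧ H.degree x₄ = 3 ∧
      (∀ y, H.Adj x₁ y → H.degree y = 3) := by
  classical
  rintro ⟨x₁, x₂, x₃, x₄, h12, h23, h34, h41, h13, h24, d1, -, d3, -, h3D⟩
  obtain ⟨y, h1y, hN⟩ := exists_third_neighbor d1 h12 h41.symm h24
  obtain ⟨c₀, hc₀⟩ := (hmin x₁).exists_isStrongColoringOn_delV
  obtain ⟨c₁, hc₁⟩ := hc₀.exists_insert (H.nearEdges x₁ y)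
    (Nat.lt_succ_of_le (card_nearEdges_le_twelve hore d1 h3D h1y))
    fun e he hsee => mem_nearEdges_of_edgeSees h1y he hsee
  obtain ⟨c₂, hc₂⟩ := hc₁.exists_insert (insert s(x₁, y) (H.nearEdges x₁ x₂))
    (card_insert_le _ _ |>.trans_lt <| by
      have := card_nearEdges_le_ten hore d1 h3D h12 h23 h34 h41 h13.symm h24.symm d3; omega)
    (by
      rintro e (rfl | he) hsee
      exacts [mem_insert_self _ _, mem_insert_of_mem (mem_nearEdges_of_edgeSees h12 he hsee)])
  obtain ⟨c₃, hc₃⟩ :=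
    hc₂.exists_insert (insert s(x₁, x₂) (insert s(x₁, y) (H.nearEdges x₁ x₄)))
    (card_insert_le _ _ |>.trans_lt <| Nat.succ_lt_succ <| card_insert_le _ _ |>.trans_lt <| by
      have :=
        card_nearEdges_le_ten hore d1 h3D h41.symm h34.symm h23.symm h12.symm h13.symm h24 d3
      omega)
    (by
      rintro e (rfl | rfl | he) hsee
      exacts [mem_insert_self _ _, mem_insert_of_mem (mem_insert_self _ _),
        mem_insert_of_mem (mem_insert_of_mem (mem_nearEdges_of_edgeSees h41.symm he hsee))])
  exact hnc (hc₃.mono (edgeSet_subset_insert_delV fun d hd => by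
    rcases hN d hd with h | h | h <;> simp [h])).hasStrongColoring
end
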